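/- Let n ≥ 2 and let G ⊂ GL(n,ℝ) be the standard unipotent group of upper triangular matrices with unit diagonal. An element g ∈ GL(n,ℝ) satisfies p ∘ g = p for every G-invariant polynomial function p on ℝⁿ if and only if the last row of g is (0, …, 0, 1), i.e. the n-th coordinate of g·x equals xₙ for every x ∈ ℝⁿ. -/

import Mathlib

/-!
Every unit upper triangular `h` fixes the last coordinate `x_L`, so `X_L` is an invariant; hence
an invariance-preserving `g` must fix `x_L` too. Conversely, if `g` fixes `x_L` and `y_L ≠ 0`,
then `g y` and `y` differ by a multiple of `y_L`, so `g y = h y` for the transvection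
`h = 1 + (y_L)⁻¹ (g y - y) e_Lᵀ`, which is unit upper triangular because `L` is the last index.
Thus `p ∘ g = p` on the dense set `{y_L ≠ 0}`, hence everywhere by continuity.
-/

open Matrix

namespace Matrix

variable {ι R : Type*} [LinearOrder ι]

def IsUnitUpperTriangular [Zero R] [One R] (h : Matrix ι ι R) : Prop :=
  (∀ i, h i i = 1) ∧ ∀ i j, j < i → h i j = 0

theorem IsUnitUpperTriangular.mulVec_apply_of_isMax [Fintype ι] [NonAssocSemiring R]
    {h : Matrix ι ι R} (hh : IsUnitUpperTriangular h) {L : ι} (hL : IsMax L) (x : ι → R) :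
    (h *ᵥ x) L = x L := by
  rw [mulVec, dotProduct, Finset.sum_eq_single L, hh.1, one_mul]
  · intro j _ hj
    rw [hh.2 L j ((not_lt.1 hL.not_lt).lt_of_ne hj), zero_mul]
  · simp

theorem exists_isUnitUpperTriangular_mulVec_eq [Fintype ι] [Field R] {L : ι} (hL : IsMax L)
    {y z : ι → R} (hy : y L ≠ 0) (hyz : z L = y L) :
    ∃ h : Matrix ι ι R, IsUnitUpperTriangular h ∧ h *ᵥ y = z := by
  refine ⟨1 + vecMulVec ((y L)⁻¹ • (z - y)) (Pi.single L 1), ⟨fun i => ?_, fun i j hji => ?_⟩, ?_⟩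
  · rw [add_apply, vecMulVec_apply]
    by_cases hi : i = L
    · subst hi; simp [hyz]
    · simp [hi]
  · have hj : j ≠ L := fun hjL => hL.not_lt (hjL ▸ hji)
    rw [add_apply, vecMulVec_apply]
    simp [hji.ne', hj]
  · rw [add_mulVec, one_mulVec, vecMulVec_mulVec, single_one_dotProduct]
    ext i
    simp [hy]

end Matrix

variable {𝕜 ι : Type*} [NontriviallyNormedField 𝕜] [Fintype ι] [LinearOrder ι]

theorem MvPolynomial.eval_mulVec_eq_of_mulVec_apply_eq {p : MvPolynomial ι 𝕜}
    (hp : ∀ h : Matrix ι ι 𝕜, h.IsUnitUpperTriangular → ∀ x, eval (h *ᵥ x) p = eval x p)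
    {L : ι} (hL : IsMax L) {M : Matrix ι ι 𝕜} (hM : ∀ x, (M *ᵥ x) L = x L) (x : ι → 𝕜) :
    eval (M *ᵥ x) p = eval x p := by
  have hdense : Dense {y : ι → 𝕜 | y L ≠ 0} :=
    (dense_compl_singleton (0 : 𝕜)).preimage (isOpenMap_eval L)
  have hagree : Set.EqOn (fun y => eval (M *ᵥ y) p) (fun y => eval y p) {y | y L ≠ 0} := by
    intro y hy
    obtain ⟨h, hh, hhy⟩ := exists_isUnitUpperTriangular_mulVec_eq hL hy (hM y)
    simpa [hhy] using hp h hh y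
  have hcont : Continuous fun y : ι → 𝕜 => eval (M *ᵥ y) p :=
    (continuous_eval p).comp (continuous_const.matrix_mulVec continuous_id)
  exact congrFun (hcont.ext_on hdense (continuous_eval p) hagree) x

/-- For `n ≥ 2`, an element `g ∈ GL(n, ℝ)` fixes every polynomial function on
`ℝⁿ` invariant under the standard unipotent group `G` (upper triangular, unit diagonal) if
and only if the last row of `g` is `(0, …, 0, 1)`, i.e. the `n`-th coordinate of `g·x`
equals `xₙ` for every `x`. -/
theorem unipotent_prime_is_affine_stabilizer
    (n : ℕ) (hn : 2 ≤ n) (g : GL (Fin n) ℝ) :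
    (∀ p : MvPolynomial (Fin n) ℝ,
      (∀ h : Matrix (Fin n) (Fin n) ℝ,
        (∀ i : Fin n, h i i = 1) → (∀ i j : Fin n, j < i → h i j = 0) →
        ∀ x : Fin n → ℝ, MvPolynomial.eval (h.mulVec x) p = MvPolynomial.eval x p) →
      ∀ x : Fin n → ℝ,
        MvPolynomial.eval ((g : Matrix (Fin n) (Fin n) ℝ).mulVec x) p = MvPolynomial.eval x p)
    ↔ ∀ x : Fin n → ℝ,
        (g : Matrix (Fin n) (Fin n) ℝ).mulVec x ⟨n - 1, by omega⟩ = x ⟨n - 1, by omega⟩ := by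
  have hL : IsMax (⟨n - 1, by omega⟩ : Fin n) := fun j _ =>
    Fin.le_def.2 (Nat.le_sub_one_of_lt j.isLt)
  constructor
  · intro hg x
    simpa using hg (MvPolynomial.X _) (fun h h1 h0 => by
      simpa using IsUnitUpperTriangular.mulVec_apply_of_isMax ⟨h1, h0⟩ hL) x
  · intro hlast p hp
    exact MvPolynomial.eval_mulVec_eq_of_mulVec_apply_eq (fun h hh => hp h hh.1 hh.2) hL hlast
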